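/- Let c₀>0, α∈[0,1), β=√(1−α²)>0, and let f:ℝ→ℂ be a solution of the profile ODE, with z=|f|². Then the limit z_∞ := lim_{s→+∞} z(s) exists; moreover z_∞ equals the limit as s→+∞ of the averages (1/s)∫₀^s z(σ)dσ. -/

import Mathlib

open Real Filter MeasureTheory

/-!
The energy `E = ‖f'‖² + (c₀²/4) e^{-αs²/2} ‖f‖²` satisfies `E' = -αsE`, so `E = E(0) e^{-αs²/2}`;
hence `z = ‖f‖²` is bounded and `h = Im(f̄ f')` is `O(e^{-αs²/4})`. With `y = Re(f̄ f')` one has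
`z' = 2y` and `h' = -(s/2)(αh + βy)`, so `Φ = z + (4/β) h/s` has `Φ' = -(2α/β) h - 4h/(βs²)`,
which is integrable on `(1, ∞)`. Thus `Φ` converges, hence so does `z = Φ - (4/β) h/s`, and the
averages of a convergent function converge to the same limit.
-/

theorem intervalIntegral_isLittleO_of_tendsto_zero {g : ℝ → ℝ}
    (hg : ∀ a b, IntervalIntegrable g volume a b) (h : Tendsto g atTop (nhds 0)) :
    (fun s => ∫ σ in (0 : ℝ)..s, g σ) =o[atTop] id := by
  refine Asymptotics.isLittleO_iff.2 fun ε hε => ?_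
  obtain ⟨a, ha⟩ := eventually_atTop.1 ((h.eventually
    (Metric.closedBall_mem_nhds 0 (half_pos hε))).and (eventually_ge_atTop 0))
  set A := ∫ σ in (0 : ℝ)..a, g σ
  filter_upwards [eventually_ge_atTop a, eventually_ge_atTop (2 * ‖A‖ / ε)] with s has hsA
  have tail : ‖∫ σ in a..s, g σ‖ ≤ ε / 2 * (s - a) := by
    have := intervalIntegral.norm_integral_le_of_norm_le_const (f := g) (a := a) (b := s)
      (C := ε / 2) fun σ hσ => by
        simpa [Real.norm_eq_abs] using (ha σ (Set.uIoc_of_le has ▸ hσ).1.le).1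
    rwa [abs_of_nonneg (sub_nonneg.2 has)] at this
  have hA : 2 * ‖A‖ ≤ ε * s := (div_le_iff₀' hε).1 hsA
  rw [← intervalIntegral.integral_add_adjacent_intervals (hg 0 a) (hg a s), id,
    Real.norm_eq_abs s, abs_of_nonneg (by nlinarith [norm_nonneg A])]
  calc ‖A + ∫ σ in a..s, g σ‖ ≤ ‖A‖ + ε / 2 * (s - a) := (norm_add_le _ _).trans (by gcongr)
    _ ≤ ε * s := by nlinarith [(ha a le_rfl).2]

theorem tendsto_average_intervalIntegral_of_tendsto {z : ℝ → ℝ} {L : ℝ}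
    (hz : ∀ a b, IntervalIntegrable z volume a b) (h : Tendsto z atTop (nhds L)) :
    Tendsto (fun s => (1 / s) * ∫ σ in (0 : ℝ)..s, z σ) atTop (nhds L) := by
  have hsmall := (intervalIntegral_isLittleO_of_tendsto_zero
    (fun a b => (hz a b).sub intervalIntegrable_const)
    (tendsto_sub_nhds_zero_iff.2 h)).tendsto_div_nhds_zero
  rw [← add_zero L]
  refine (hsmall.const_add L).congr' ?_
  filter_upwards [eventually_gt_atTop 0] with s hs
  rw [intervalIntegral.integral_sub (hz 0 s) intervalIntegrable_const,
    intervalIntegral.integral_const, smul_eq_mul, sub_zero, id]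
  field_simp
  ring

theorem eq_mul_exp_sub_of_hasDerivAt {E a a' : ℝ → ℝ} (ha : ∀ s, HasDerivAt a (a' s) s)
    (hE : ∀ s, HasDerivAt E (a' s * E s) s) (s : ℝ) : E s = E 0 * exp (a s - a 0) := by
  have hderiv : ∀ t, HasDerivAt (fun t => E t * exp (-a t)) 0 t := fun t =>
    ((hE t).fun_mul (ha t).fun_neg.exp).congr_deriv (by ring)
  have hconst := is_const_of_deriv_eq_zero (fun t => (hderiv t).differentiableAt)
    (fun t => (hderiv t).deriv) s 0
  rw [sub_eq_neg_add, exp_add, ← mul_assoc, ← hconst, mul_assoc, ← exp_add]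
  simp

theorem integrable_mul_of_abs_le_mul_exp {g : ℝ → ℝ} {α C : ℝ} (hg : Continuous g) (hα : 0 ≤ α)
    (hbound : ∀ s, |g s| ≤ C * exp (-α * s ^ 2 / 4)) :
    Integrable (fun s => α * g s) := by
  rcases hα.eq_or_lt with rfl | hα
  · simp
  refine ((integrable_exp_neg_mul_sq (by positivity : 0 < α / 4)).const_mul (α * C)).mono'
    (continuous_const.mul hg).aestronglyMeasurable (ae_of_all _ fun s => ?_)
  rw [norm_mul, Real.norm_eq_abs, abs_of_pos hα, mul_assoc,
    show -(α / 4) * s ^ 2 = -α * s ^ 2 / 4 by ring]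
  exact mul_le_mul_of_nonneg_left (hbound s) hα.le

theorem integrableOn_Ioi_div_sq_of_abs_le {g : ℝ → ℝ} {C : ℝ} (hg : Continuous g)
    (hbound : ∀ s, |g s| ≤ C) :
    IntegrableOn (fun s => g s / s ^ 2) (Set.Ioi 1) := by
  refine ((integrableOn_Ioi_rpow_of_lt (by norm_num : (-2 : ℝ) < -1) one_pos).const_mul C).mono'
    ((hg.continuousOn.div (continuous_pow 2).continuousOn fun s hs => by
      have : (1 : ℝ) < s := hs; positivity).aestronglyMeasurable measurableSet_Ioi) ?_
  filter_upwards [ae_restrict_mem measurableSet_Ioi] with s (hs : 1 < s)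
  rw [norm_div, norm_pow, Real.norm_eq_abs, Real.norm_eq_abs, rpow_neg (by positivity),
    rpow_two, abs_of_pos (by positivity : 0 < s), ← div_eq_mul_inv]
  gcongr
  exact hbound s

/-- The profile ODE `f'' + (s/2)(α+iβ) f' + (c₀²/4) e^{-αs²/2} f = 0`, with
`β = √(1-α²)`, encoded for a pair `(f, f')`. -/
def ProfileODE (c₀ α : ℝ) (f f' : ℝ → ℂ) : Prop :=
  ∀ s : ℝ,
    HasDerivAt f (f' s) s ∧
    HasDerivAt f'
      (-(((s : ℂ) / 2) * ((α : ℂ) + (Real.sqrt (1 - α ^ 2) : ℂ) * Complex.I) * f' s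
        + ((c₀ ^ 2 / 4 : ℝ) : ℂ) * ((Real.exp (-α * s ^ 2 / 2) : ℝ) : ℂ) * f s)) s

open ComplexConjugate

noncomputable def profileEnergy (c₀ α : ℝ) (f f' : ℝ → ℂ) (s : ℝ) : ℝ :=
  ‖f' s‖ ^ 2 + c₀ ^ 2 / 4 * exp (-α * s ^ 2 / 2) * ‖f s‖ ^ 2

namespace ProfileODE

variable {c₀ α : ℝ} {f f' : ℝ → ℂ}

theorem hasDerivAt_sq_norm (h : ProfileODE c₀ α f f') (s : ℝ) :
    HasDerivAt (‖f ·‖ ^ 2) (2 * (conj (f s) * f' s).re) s := by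
  simpa [Complex.inner, mul_comm] using (h s).1.norm_sq

theorem hasDerivAt_im_conj_mul (h : ProfileODE c₀ α f f') (s : ℝ) :
    HasDerivAt (fun t => (conj (f t) * f' t).im)
      (-(s / 2) * (α * (conj (f s) * f' s).im + √(1 - α ^ 2) * (conj (f s) * f' s).re)) s := by
  refine (Complex.imCLM.hasFDerivAt.comp_hasDerivAt s ((h s).1.star.mul (h s).2)).congr_deriv ?_
  simp only [Complex.imCLM_apply, Complex.mul_re, Complex.mul_im, Complex.add_re, Complex.add_im,
    Complex.neg_re, Complex.neg_im, Complex.ofReal_re, Complex.ofReal_im, Complex.div_ofNat_re,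
    Complex.div_ofNat_im, Complex.I_re, Complex.I_im, Complex.star_def, Complex.conj_re,
    Complex.conj_im]
  ring

theorem hasDerivAt_profileEnergy (h : ProfileODE c₀ α f f') (s : ℝ) :
    HasDerivAt (profileEnergy c₀ α f f') (-(α * s) * profileEnergy c₀ α f f' s) s := by
  have hweight : HasDerivAt (fun t => c₀ ^ 2 / 4 * exp (-α * t ^ 2 / 2))
      (c₀ ^ 2 / 4 * (exp (-α * s ^ 2 / 2) * -(α * s))) s := by
    refine (((hasDerivAt_pow 2 s).const_mul (-α)).div_const 2).exp.const_mul _ |>.congr_deriv ?_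
    ring
  refine ((h s).2.norm_sq.add (hweight.mul ((h s).1.norm_sq))).congr_deriv ?_
  simp only [profileEnergy, Complex.inner, Complex.sq_norm]
  simp only [Complex.mul_re, Complex.mul_im, Complex.add_re, Complex.add_im,
    Complex.neg_re, Complex.neg_im, Complex.ofReal_re, Complex.ofReal_im, Complex.div_ofNat_re,
    Complex.div_ofNat_im, Complex.I_re, Complex.I_im, Complex.conj_re,
    Complex.conj_im, Complex.normSq_apply]
  ring

theorem profileEnergy_eq (h : ProfileODE c₀ α f f') (s : ℝ) :
    profileEnergy c₀ α f f' s = profileEnergy c₀ α f f' 0 * exp (-α * s ^ 2 / 2) := by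
  have hexp : ∀ t : ℝ, HasDerivAt (fun t => -α * t ^ 2 / 2) (-(α * t)) t := fun t =>
    (((hasDerivAt_pow 2 t).const_mul (-α)).div_const 2).congr_deriv (by ring)
  simpa using eq_mul_exp_sub_of_hasDerivAt hexp h.hasDerivAt_profileEnergy s

theorem sq_norm_le (h : ProfileODE c₀ α f f') (hc₀ : c₀ ≠ 0) (s : ℝ) :
    ‖f s‖ ^ 2 ≤ 4 / c₀ ^ 2 * profileEnergy c₀ α f f' 0 := by
  have hE : c₀ ^ 2 / 4 * ‖f s‖ ^ 2 * exp (-α * s ^ 2 / 2)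
      ≤ profileEnergy c₀ α f f' 0 * exp (-α * s ^ 2 / 2) := by
    rw [← h.profileEnergy_eq s, profileEnergy]
    nlinarith [sq_nonneg ‖f' s‖]
  have := le_of_mul_le_mul_right hE (exp_pos _)
  rw [div_mul_eq_mul_div, le_div_iff₀ (by positivity)]
  linarith

theorem sq_norm_deriv_le (h : ProfileODE c₀ α f f') (s : ℝ) :
    ‖f' s‖ ^ 2 ≤ profileEnergy c₀ α f f' 0 * exp (-α * s ^ 2 / 2) := by
  rw [← h.profileEnergy_eq s, profileEnergy]
  exact le_add_of_nonneg_right (by positivity)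

theorem exists_abs_im_conj_mul_le (h : ProfileODE c₀ α f f') (hc₀ : c₀ ≠ 0) :
    ∃ C, 0 ≤ C ∧ ∀ s, |(conj (f s) * f' s).im| ≤ C * exp (-α * s ^ 2 / 4) := by
  set E₀ := profileEnergy c₀ α f f' 0
  refine ⟨√(4 / c₀ ^ 2 * E₀ ^ 2), sqrt_nonneg _, fun s => abs_le_of_sq_le_sq ?_ (by positivity)⟩
  calc (conj (f s) * f' s).im ^ 2 ≤ ‖conj (f s) * f' s‖ ^ 2 := by
        rw [← sq_abs]; gcongr; exact Complex.abs_im_le_norm _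
    _ = ‖f s‖ ^ 2 * ‖f' s‖ ^ 2 := by rw [norm_mul, Complex.norm_conj, mul_pow]
    _ ≤ 4 / c₀ ^ 2 * E₀ * (E₀ * exp (-α * s ^ 2 / 2)) :=
        mul_le_mul (h.sq_norm_le hc₀ s) (h.sq_norm_deriv_le s) (sq_nonneg _)
          ((sq_nonneg _).trans (h.sq_norm_le hc₀ s))
    _ = (√(4 / c₀ ^ 2 * E₀ ^ 2) * exp (-α * s ^ 2 / 4)) ^ 2 := by
        rw [mul_pow, sq_sqrt (by positivity), ← exp_nat_mul]
        ring_nf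

theorem hasDerivAt_sq_norm_add_im_conj_mul_div (h : ProfileODE c₀ α f f')
    (hβ : √(1 - α ^ 2) ≠ 0) {s : ℝ} (hs : s ≠ 0) :
    HasDerivAt (fun t => ‖f t‖ ^ 2 + 4 / √(1 - α ^ 2) * ((conj (f t) * f' t).im / t))
      (-(2 / √(1 - α ^ 2)) * (α * (conj (f s) * f' s).im)
        - 4 / √(1 - α ^ 2) * ((conj (f s) * f' s).im / s ^ 2)) s := by
  refine ((h.hasDerivAt_sq_norm s).add (((h.hasDerivAt_im_conj_mul s).div (hasDerivAt_id s)
    hs).const_mul _)).congr_deriv ?_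
  simp only [id]
  field_simp
  ring

theorem exists_tendsto_sq_norm (h : ProfileODE c₀ α f f') (hc₀ : c₀ ≠ 0)
    (hα : α ∈ Set.Ico (0 : ℝ) 1) : ∃ L, Tendsto (‖f ·‖ ^ 2) atTop (nhds L) := by
  have hβ : √(1 - α ^ 2) ≠ 0 := (sqrt_pos.2 (by nlinarith [hα.1, hα.2])).ne'
  set H := fun t => (conj (f t) * f' t).im
  obtain ⟨C, hC, hH⟩ := h.exists_abs_im_conj_mul_le hc₀
  have hHcont : Continuous H :=
    continuous_iff_continuousAt.2 fun s => (h.hasDerivAt_im_conj_mul s).continuousAt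
  have hHbdd : ∀ s, |H s| ≤ C := fun s =>
    (hH s).trans (mul_le_of_le_one_right hC (exp_le_one_iff.2 (by nlinarith [hα.1, sq_nonneg s])))
  have hcorrected := tendsto_limUnder_of_hasDerivAt_of_integrableOn_Ioi
    (fun s (hs : 1 < s) => h.hasDerivAt_sq_norm_add_im_conj_mul_div hβ (by positivity))
    ((((integrable_mul_of_abs_le_mul_exp hHcont hα.1 hH).const_mul _).integrableOn).sub
      ((integrableOn_Ioi_div_sq_of_abs_le hHcont hHbdd).const_mul _))
  have hsmall : Tendsto (fun t => 4 / √(1 - α ^ 2) * (H t / t)) atTop (nhds 0) := by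
    simpa [div_eq_inv_mul] using ((tendsto_inv_atTop_zero.zero_mul_isBoundedUnder_le
      (isBoundedUnder_of ⟨C, fun t => (Real.norm_eq_abs _).trans_le (hHbdd t)⟩)).const_mul
      (4 / √(1 - α ^ 2)))
  exact ⟨_, by simpa only [H, add_sub_cancel_right, sub_zero] using hcorrected.sub hsmall⟩

end ProfileODE

open intervalIntegral in
/-- For `α ∈ [0,1)` the limit `z_∞ = lim_{s→∞} |f(s)|²`
exists, and it also equals the limit of the averages `(1/s)∫₀ˢ |f|²`. -/
theorem profileODE_z_limit (c₀ α : ℝ) (hc₀ : 0 < c₀)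
    (hα : α ∈ Set.Ico (0 : ℝ) 1)
    (f f' : ℝ → ℂ) (h : ProfileODE c₀ α f f') :
    ∃ L : ℝ,
      Tendsto (fun s : ℝ => ‖f s‖ ^ 2) atTop (nhds L) ∧
      Tendsto (fun s : ℝ => (1 / s) * ∫ σ in (0 : ℝ)..s, ‖f σ‖ ^ 2)
        atTop (nhds L) := by
  obtain ⟨L, hL⟩ := h.exists_tendsto_sq_norm hc₀.ne' hα
  have hcont : Continuous (‖f ·‖ ^ 2) :=
    continuous_iff_continuousAt.2 fun s => (h.hasDerivAt_sq_norm s).continuousAt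
  exact ⟨L, hL, tendsto_average_intervalIntegral_of_tendsto hcont.intervalIntegrable hL⟩
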